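/- arXiv:2408.09197 — 2 statements merged into one kernel-verified Lean document; each statement's English description precedes it below -/
import Mathlib

section
/- Let L be a finite geometric lattice of rank r with the minimal labeling λ induced by a linear order on its atoms, and let G_lex be the associated directed graph on the maximal chains of L. Then every maximal chain of L has directed distance at most binom(r,2) in G_lex to the unique ascending chain of L. -/
/-- A finite bounded lattice is *geometric* if it is atomistic (every element is a join
of atoms) and semimodular (whenever distinct `y`, `y'` both cover `x`, the join `y ⊔ y'`
covers both). -/
def IsGeometricLattice (L : Type*) [Lattice L] [BoundedOrder L] : Prop :=
  (∀ x : L, ∃ s : Finset L, (∀ a ∈ s, IsAtom a) ∧ s.sup id = x) ∧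
  (∀ x y y' : L, y ≠ y' → x ⋖ y → x ⋖ y' → y ⋖ (y ⊔ y') ∧ y' ⋖ (y ⊔ y'))

/-- `lab` is the minimal labeling induced by the linear order on the atoms of `L`
represented by the function `f` (injective on atoms): for every cover relation `u ⋖ v`,
`lab u v` is the atom `a ≤ v` with `a ≰ u` having the least value of `f`. -/
def IsMinimalLabeling {L : Type*} [Lattice L] [OrderBot L] (f : L → ℕ) (lab : L → L → L) : Prop :=
  ∀ u v : L, u ⋖ v →
    IsAtom (lab u v) ∧ lab u v ≤ v ∧ ¬ lab u v ≤ u ∧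
    ∀ a : L, IsAtom a → a ≤ v → ¬ a ≤ u → f (lab u v) ≤ f a

/-- `g` is a maximal chain `⊥ = g 0 ⋖ g 1 ⋖ ⋯ ⋖ g r = ⊤`. -/
def IsMaxChainFun {L : Type*} [PartialOrder L] [BoundedOrder L] (r : ℕ)
    (g : Fin (r+1) → L) : Prop :=
  g 0 = ⊥ ∧ g (Fin.last r) = ⊤ ∧ ∀ i : Fin r, g i.castSucc ⋖ g i.succ

/-- The label sequence of the maximal chain `g` with respect to the labeling `lab`. -/
def labelSeq {L : Type*} (lab : L → L → L) {r : ℕ} (g : Fin (r+1) → L) (i : Fin r) : L :=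
  lab (g i.castSucc) (g i.succ)

/-- The operator `T_i` of the directed graph `G_lex`: `TMove f lab i M M'` holds iff the
label sequence of `M` has a descent at rank `i` and `M'` is obtained from `M` by replacing
the rank-`i` element by the unique element producing an ascent there, all other elements
unchanged. -/
def TMove {L : Type*} (f : L → ℕ) (lab : L → L → L) {r : ℕ} (i : ℕ)
    (M M' : Fin (r+1) → L) : Prop :=
  ∃ (h1 : 0 < i) (h2 : i < r),
    f (lab (M ⟨i, by omega⟩) (M ⟨i+1, by omega⟩)) <
      f (lab (M ⟨i-1, by omega⟩) (M ⟨i, by omega⟩)) ∧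
    M' ⟨i, by omega⟩ ≠ M ⟨i, by omega⟩ ∧
    (∀ j : Fin (r+1), (j : ℕ) ≠ i → M' j = M j) ∧
    f (lab (M' ⟨i-1, by omega⟩) (M' ⟨i, by omega⟩)) ≤
      f (lab (M' ⟨i, by omega⟩) (M' ⟨i+1, by omega⟩))

/-!
Let `m_k` be the `k`-th label of the ascending chain `C`; it is the `f`-least atom not below
`C_k`. Suppose a maximal chain `N` agrees with `C` up to rank `k`, and let `i` be the least rank
with `m_k ≤ N_i`. If `i > k + 1`, replacing `N_{i-1}` by `N_{i-2} ⊔ m_k` is an edge of `G_lex`: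
semimodularity makes the result a maximal chain, and the minimality of `m_k` forces a descent
before the exchange and an ascent after it. This lowers `i` by one, so after at most `r - k - 1`
moves `i = k + 1`, i.e. `N_{k+1} = C_k ⊔ m_k = C_{k+1}`. Summing over `k` gives at most
`∑ₖ (r - k - 1) = r.choose 2` moves.
-/

section Semimodular

variable {L : Type*} [Lattice L]

theorem CovBy.sup_eq_of_not_le {a b c : L} (hab : a ⋖ b) (hcb : c ≤ b) (hca : ¬ c ≤ a) :
    a ⊔ c = b :=
  ((hab.eq_or_eq le_sup_left (sup_le hab.le hcb)).resolve_left
    fun h => hca (h ▸ le_sup_right))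

theorem CovBy.covBy_sup_of_covBy [IsWeakUpperModularLattice L] {a b c : L} (hb : a ⋖ b)
    (hc : a ⋖ c) (hbc : b ≠ c) : b ⋖ b ⊔ c := by
  have hinf : b ⊓ c = a := by
    refine ((hb.eq_or_eq (le_inf hb.le hc.le) inf_le_left).resolve_right fun h => hbc ?_)
    have hbc' : b ≤ c := inf_eq_left.1 h
    exact (hc.eq_or_eq hb.le hbc').resolve_left hb.ne'
  exact covBy_sup_of_inf_covBy_of_inf_covBy_left (hinf ▸ hb) (hinf ▸ hc)

theorem IsGeometricLattice.isWeakUpperModularLattice [BoundedOrder L]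
    (hL : IsGeometricLattice L) : IsWeakUpperModularLattice L where
  covBy_sup_of_inf_covBy_covBy {a b} ha hb :=
    (hL.2 (a ⊓ b) a b (fun h => ha.ne (by rw [h, inf_idem])) ha hb).1

variable [OrderBot L] [Finite L] [IsWeakUpperModularLattice L]

theorem covBy_sup_of_isAtom {m : L} (hm : IsAtom m) {x : L} (hmx : ¬ m ≤ x) : x ⋖ x ⊔ m := by
  have : IsStronglyCoatomic L := IsStronglyCoatomic.of_wellFounded_gt wellFounded_gt
  induction x using WellFoundedLT.induction with
  | _ x ih =>
    rcases eq_or_ne x ⊥ with rfl | hx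
    · simpa using hm.bot_covBy
    obtain ⟨z, -, hzx⟩ := exists_le_covBy_of_lt (bot_lt_iff_ne_bot.2 hx)
    have hmz : ¬ m ≤ z := fun h => hmx (h.trans hzx.le)
    have hxzm : x ≠ z ⊔ m := fun h => hmx (h ▸ le_sup_right)
    have h := hzx.covBy_sup_of_covBy (ih z hzx.lt hmz) hxzm
    rwa [← sup_assoc, sup_eq_left.2 hzx.le] at h

/-- Exchanging the middle element of `a ⋖ b ⋖ d` for `a ⊔ m`. -/
theorem covBy_sup_of_isAtom_of_covBy {a b d m : L} (hab : a ⋖ b) (hbd : b ⋖ d) (hm : IsAtom m)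
    (hmb : ¬ m ≤ b) (hmd : m ≤ d) : a ⋖ a ⊔ m ∧ a ⊔ m ⋖ d := by
  have hma : ¬ m ≤ a := fun h => hmb (h.trans hab.le)
  have hay : a ⋖ a ⊔ m := covBy_sup_of_isAtom hm hma
  have hby : b ≠ a ⊔ m := fun h => hmb (h ▸ le_sup_right)
  have hbyd : b ⊔ (a ⊔ m) = d :=
    hbd.sup_eq_of_not_le (sup_le (hab.le.trans hbd.le) hmd) fun h => hmb (le_sup_right.trans h)
  refine ⟨hay, ?_⟩
  simpa [hbyd, sup_comm] using hay.covBy_sup_of_covBy hab hby.symm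

end Semimodular

namespace IsMaxChainFun

variable {L : Type*} [PartialOrder L] [BoundedOrder L] {r : ℕ} {g : Fin (r+1) → L}

theorem covBy (hg : IsMaxChainFun r g) {j : ℕ} (hj : j < r) :
    g ⟨j, by omega⟩ ⋖ g ⟨j+1, by omega⟩ :=
  hg.2.2 ⟨j, hj⟩

theorem monotone (hg : IsMaxChainFun r g) : Monotone g :=
  Fin.monotone_iff_le_succ.2 fun i => (hg.2.2 i).le

theorem update (hg : IsMaxChainFun r g) {j : ℕ} (hj : j + 2 ≤ r) {y : L}
    (hy₁ : g ⟨j, by omega⟩ ⋖ y) (hy₂ : y ⋖ g ⟨j+2, by omega⟩) :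
    IsMaxChainFun r (Function.update g ⟨j+1, by omega⟩ y) := by
  refine ⟨?_, ?_, fun q => ?_⟩
  · rw [Function.update_of_ne (by simp [Fin.ext_iff]), hg.1]
  · rw [Function.update_of_ne (by simp [Fin.ext_iff]; omega), hg.2.1]
  · simp only [Function.update_apply, Fin.ext_iff, Fin.val_castSucc, Fin.val_succ]
    split_ifs with h₁ h₂ h₂
    · omega
    · rwa [show q.succ = ⟨j+2, by omega⟩ from Fin.ext (by simp [h₁])]
    · rwa [show q.castSucc = ⟨j, by omega⟩ from Fin.ext (by simp; omega)]
    · exact hg.2.2 q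

end IsMaxChainFun

theorem tMove_update {L : Type*} {f : L → ℕ} {lab : L → L → L} {r j : ℕ} (hj : j + 2 ≤ r)
    {N : Fin (r+1) → L} {y : L}
    (hdesc : f (lab (N ⟨j+1, by omega⟩) (N ⟨j+2, by omega⟩)) <
      f (lab (N ⟨j, by omega⟩) (N ⟨j+1, by omega⟩)))
    (hne : y ≠ N ⟨j+1, by omega⟩)
    (hasc : f (lab (N ⟨j, by omega⟩) y) ≤ f (lab y (N ⟨j+2, by omega⟩))) :
    TMove f lab (j+1) N (Function.update N ⟨j+1, by omega⟩ y) := by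
  have hupd : ∀ p : Fin (r+1), (p : ℕ) ≠ j + 1 → Function.update N ⟨j+1, by omega⟩ y p = N p :=
    fun p hp => Function.update_of_ne (fun h => hp (by rw [h])) _ _
  refine ⟨j.succ_pos, by omega, hdesc, by simpa using hne, hupd, ?_⟩
  rwa [Function.update_self, hupd _ (by simp), hupd _ (by simp)]

section Labeling

variable {L : Type*} [Lattice L] {f : L → ℕ} {lab : L → L → L}

theorem IsMinimalLabeling.le_label [OrderBot L] (hlab : IsMinimalLabeling f lab) {c m u v : L}
    (hmin : ∀ a, IsAtom a → ¬ a ≤ c → f m ≤ f a) (huv : u ⋖ v) (hcu : c ≤ u) :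
    f m ≤ f (lab u v) :=
  hmin _ (hlab u v huv).1 fun h => (hlab u v huv).2.2.1 (h.trans hcu)

variable [BoundedOrder L] {r : ℕ}

theorem IsMinimalLabeling.label_le_of_monotone (hlab : IsMinimalLabeling f lab)
    {C : Fin (r+1) → L} (hC : IsMaxChainFun r C) (hasc : Monotone fun i => f (labelSeq lab C i))
    {k : ℕ} (hk : k < r) {a : L} (ha : IsAtom a) (hak : ¬ a ≤ C ⟨k, by omega⟩) :
    f (lab (C ⟨k, by omega⟩) (C ⟨k+1, by omega⟩)) ≤ f a := by
  -- Otherwise the label of `C` at the rank where `a` enters would be smaller than the `k`-th.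
  by_contra! hlt
  have hout : ∀ j, k ≤ j → ∀ hj : j ≤ r, ¬ a ≤ C ⟨j, by omega⟩ := by
    intro j hkj
    induction j, hkj using Nat.le_induction with
    | base => exact fun _ => hak
    | succ j hkj ih =>
      intro hj haj
      have hle := (hlab _ _ (hC.covBy (show j < r by omega))).2.2.2 a ha haj (ih (by omega))
      have hmono : f (labelSeq lab C ⟨k, hk⟩) ≤ f (labelSeq lab C ⟨j, by omega⟩) :=
        hasc (Fin.mk_le_mk.2 hkj)
      exact hlt.not_ge (hmono.trans hle)
  exact hout r hk.le le_rfl (le_top.trans_eq hC.2.1.symm)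

theorem IsMaxChainFun.tMove_update_sup [Finite L] [IsWeakUpperModularLattice L]
    (hf : Set.InjOn f {a : L | IsAtom a}) (hlab : IsMinimalLabeling f lab)
    {N : Fin (r+1) → L} (hN : IsMaxChainFun r N) {j : ℕ} (hj : j + 2 ≤ r) {c m : L}
    (hm : IsAtom m) (hmin : ∀ a, IsAtom a → ¬ a ≤ c → f m ≤ f a) (hc : c ≤ N ⟨j, by omega⟩)
    (hm₁ : ¬ m ≤ N ⟨j+1, by omega⟩) (hm₂ : m ≤ N ⟨j+2, by omega⟩) :
    IsMaxChainFun r (Function.update N ⟨j+1, by omega⟩ (N ⟨j, by omega⟩ ⊔ m)) ∧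
      TMove f lab (j+1) N (Function.update N ⟨j+1, by omega⟩ (N ⟨j, by omega⟩ ⊔ m)) := by
  have hA := hN.covBy (show j < r by omega)
  have hB := hN.covBy (show j + 1 < r by omega)
  obtain ⟨hy₁, hy₂⟩ := covBy_sup_of_isAtom_of_covBy hA hB hm hm₁ hm₂
  have hdesc : f m < f (lab (N ⟨j, by omega⟩) (N ⟨j+1, by omega⟩)) :=
    (hlab.le_label hmin hA hc).lt_of_ne fun h =>
      hm₁ (hf hm (hlab _ _ hA).1 h ▸ (hlab _ _ hA).2.1)
  refine ⟨hN.update hj hy₁ hy₂, tMove_update hj ?_ (fun h => hm₁ (h ▸ le_sup_right)) ?_⟩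
  · exact ((hlab _ _ hB).2.2.2 m hm hm₂ hm₁).trans_lt hdesc
  · exact ((hlab _ _ hy₁).2.2.2 m hm le_sup_right fun h => hm₁ (h.trans hA.le)).trans
      (hlab.le_label hmin hy₂ (hc.trans le_sup_left))

end Labeling

inductive LexPath {L : Type*} [PartialOrder L] [BoundedOrder L] (f : L → ℕ) (lab : L → L → L)
    {r : ℕ} : ℕ → (Fin (r+1) → L) → (Fin (r+1) → L) → Prop
  | refl {N} (hN : IsMaxChainFun r N) : LexPath f lab 0 N N
  | cons {d i N N' N''} (hN : IsMaxChainFun r N) (hmove : TMove f lab i N N')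
      (p : LexPath f lab d N' N'') : LexPath f lab (d+1) N N''

namespace LexPath

variable {L : Type*} [PartialOrder L] [BoundedOrder L] {f : L → ℕ} {lab : L → L → L} {r : ℕ}
  {d₁ d₂ : ℕ} {N N' N'' : Fin (r+1) → L}

theorem isMaxChainFun_right (p : LexPath f lab d₁ N N') : IsMaxChainFun r N' := by
  induction p with
  | refl hN => exact hN
  | cons _ _ _ ih => exact ih

theorem trans (p : LexPath f lab d₁ N N') (q : LexPath f lab d₂ N' N'') :
    LexPath f lab (d₁ + d₂) N N'' := by
  induction p with
  | refl _ => simpa using q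
  | cons hN hmove _ ih => rw [Nat.add_right_comm]; exact cons hN hmove (ih q)

theorem exists_seq (p : LexPath f lab d₁ N N') :
    ∃ Ms : Fin (d₁+1) → Fin (r+1) → L, Ms 0 = N ∧ Ms (Fin.last d₁) = N' ∧
      (∀ k, IsMaxChainFun r (Ms k)) ∧
      ∀ k : Fin d₁, ∃ i, TMove f lab i (Ms k.castSucc) (Ms k.succ) := by
  induction p with
  | refl hN => exact ⟨fun _ => _, rfl, rfl, fun _ => hN, fun k => k.elim0⟩
  | @cons d i N N' N'' hN hmove _ ih =>
    obtain ⟨Ms, h0, hlast, hmax, hmoves⟩ := ih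
    refine ⟨Fin.cons N Ms, rfl, by rw [← Fin.succ_last, Fin.cons_succ, hlast],
      Fin.cases hN fun k => by simpa using hmax k, Fin.cases ⟨i, ?_⟩ fun k => ?_⟩
    · simpa [h0] using hmove
    · simpa [← Fin.succ_castSucc] using hmoves k

end LexPath

section Distance

variable {L : Type*} [Lattice L] [BoundedOrder L] [Finite L] [IsWeakUpperModularLattice L]
  {f : L → ℕ} {lab : L → L → L} {r : ℕ}

theorem exists_lexPath_agreeing_succ (hf : Set.InjOn f {a : L | IsAtom a})
    (hlab : IsMinimalLabeling f lab) {C : Fin (r+1) → L} (hC : IsMaxChainFun r C)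
    (hasc : Monotone fun i => f (labelSeq lab C i)) {k : ℕ} (hk : k < r) {i : ℕ} (hki : k < i)
    (hi : i ≤ r) {N : Fin (r+1) → L} (hN : IsMaxChainFun r N)
    (hagree : ∀ p : Fin (r+1), (p : ℕ) ≤ k → N p = C p)
    (hmN : lab (C ⟨k, by omega⟩) (C ⟨k+1, by omega⟩) ≤ N ⟨i, by omega⟩) :
    ∃ d ≤ i - k - 1, ∃ N', LexPath f lab d N N' ∧
      ∀ p : Fin (r+1), (p : ℕ) ≤ k + 1 → N' p = C p := by
  obtain ⟨hm, hmC₁, hmC₀, -⟩ := hlab _ _ (hC.covBy hk)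
  induction i, hki using Nat.le_induction generalizing N with
  | base =>
    have hNk : N ⟨k, by omega⟩ = C ⟨k, by omega⟩ := hagree _ le_rfl
    have hNk₁ : N ⟨k+1, by omega⟩ = C ⟨k+1, by omega⟩ :=
      ((hNk ▸ hN.covBy hk).sup_eq_of_not_le hmN hmC₀).symm.trans
        ((hC.covBy hk).sup_eq_of_not_le hmC₁ hmC₀)
    refine ⟨0, Nat.zero_le _, N, .refl hN, fun p hp => ?_⟩
    rcases hp.lt_or_eq with hp | hp
    · exact hagree p (by omega)
    · rwa [show p = ⟨k+1, by omega⟩ from Fin.ext hp]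
  | succ i hki ih =>
    by_cases hmi : lab (C ⟨k, by omega⟩) (C ⟨k+1, by omega⟩) ≤ N ⟨i, by omega⟩
    · obtain ⟨d, hd, N', p, hN'⟩ := ih (by omega) hN hagree hmi
      exact ⟨d, by omega, N', p, hN'⟩
    obtain ⟨j, rfl⟩ : ∃ j, i = j + 1 := ⟨i - 1, by omega⟩
    have hc : C ⟨k, by omega⟩ ≤ N ⟨j, by omega⟩ :=
      hagree ⟨k, by omega⟩ le_rfl ▸ hN.monotone (Fin.mk_le_mk.2 (by omega))
    obtain ⟨hN', hmove⟩ := hN.tMove_update_sup hf hlab hi hm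
      (fun a ha hak => hlab.label_le_of_monotone hC hasc hk ha hak) hc hmi hmN
    obtain ⟨d, hd, N'', p, hN''⟩ := ih (by omega) hN'
      (fun p hp => by rw [Function.update_of_ne (by simp [Fin.ext_iff]; omega), hagree p hp])
      (by simp)
    exact ⟨d + 1, by omega, N'', .cons hN hmove p, hN''⟩

theorem exists_lexPath_to_ascending (hf : Set.InjOn f {a : L | IsAtom a})
    (hlab : IsMinimalLabeling f lab) {C : Fin (r+1) → L} (hC : IsMaxChainFun r C)
    (hasc : Monotone fun i => f (labelSeq lab C i)) {n k : ℕ} (hkr : k + n = r)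
    {N : Fin (r+1) → L} (hN : IsMaxChainFun r N)
    (hagree : ∀ p : Fin (r+1), (p : ℕ) ≤ k → N p = C p) :
    ∃ d ≤ n.choose 2, LexPath f lab d N C := by
  induction n generalizing k N with
  | zero =>
    obtain rfl : N = C := funext fun p => hagree p (by omega)
    exact ⟨0, le_rfl, .refl hN⟩
  | succ n ih =>
    obtain ⟨d₁, hd₁, N', p, hN'⟩ := exists_lexPath_agreeing_succ hf hlab hC hasc
      (show k < r by omega) (show k < r by omega) le_rfl hN hagree (le_top.trans_eq hN.2.1.symm)
    obtain ⟨d₂, hd₂, q⟩ := ih (k := k + 1) (by omega) p.isMaxChainFun_right hN'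
    refine ⟨d₁ + d₂, ?_, p.trans q⟩
    have hpascal : (n + 1).choose 2 = n + n.choose 2 := by
      rw [show 2 = 1 + 1 from rfl, Nat.choose_succ_succ', Nat.choose_one_right]
    omega

end Distance

theorem stmt12_general (L : Type*) [Lattice L] [Fintype L] [BoundedOrder L] (r : ℕ)
    (hgeo : IsGeometricLattice L)
    (f : L → ℕ) (hf : Set.InjOn f {a : L | IsAtom a})
    (lab : L → L → L) (hlab : IsMinimalLabeling f lab)
    (C : Fin (r+1) → L) (hC : IsMaxChainFun r C)
    (hCasc : Monotone fun i => f (labelSeq lab C i))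
    (M : Fin (r+1) → L) (hM : IsMaxChainFun r M) :
    ∃ d : ℕ, d ≤ r.choose 2 ∧
      ∃ Ms : Fin (d+1) → Fin (r+1) → L,
        Ms 0 = M ∧ Ms (Fin.last d) = C ∧
        (∀ k : Fin (d+1), IsMaxChainFun r (Ms k)) ∧
        (∀ k : Fin d, ∃ i : ℕ, TMove f lab i (Ms k.castSucc) (Ms k.succ)) := by
  have := hgeo.isWeakUpperModularLattice
  have hbot : ∀ p : Fin (r+1), (p : ℕ) ≤ 0 → M p = C p := fun p hp => by
    rw [show p = 0 from Fin.ext (Nat.le_zero.1 hp), hM.1, hC.1]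
  obtain ⟨d, hd, p⟩ := exists_lexPath_to_ascending hf hlab hC hCasc (zero_add r) hM hbot
  exact ⟨d, hd, p.exists_seq⟩

/-- In `G_lex`, every maximal chain is at directed distance at most `r.choose 2` from the
unique ascending chain: there is a directed path of length `d ≤ r.choose 2` of `G_lex`
moves from it to the ascending chain. -/
theorem stmt12 (L : Type*) [Lattice L] [Fintype L] [BoundedOrder L] (r : ℕ)
    (hgeo : IsGeometricLattice L)
    (hrank : ∀ c : Set L, IsMaxChain (· ≤ ·) c → c.ncard = r + 1)
    (f : L → ℕ) (hf : Set.InjOn f {a : L | IsAtom a})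
    (lab : L → L → L) (hlab : IsMinimalLabeling f lab)
    (C : Fin (r+1) → L) (hC : IsMaxChainFun r C)
    (hCasc : Monotone fun i => f (labelSeq lab C i))
    (M : Fin (r+1) → L) (hM : IsMaxChainFun r M) :
    ∃ d : ℕ, d ≤ r.choose 2 ∧
      ∃ Ms : Fin (d+1) → Fin (r+1) → L,
        Ms 0 = M ∧ Ms (Fin.last d) = C ∧
        (∀ k : Fin (d+1), IsMaxChainFun r (Ms k)) ∧
        (∀ k : Fin d, ∃ i : ℕ, TMove f lab i (Ms k.castSucc) (Ms k.succ)) :=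
  stmt12_general L r hgeo f hf lab hlab C hC hCasc M hM
end

section
/- Let L be a finite geometric lattice with the minimal labeling λ induced by a linear order on its atoms. Then the directed edges of G_lex are exactly the cover relations of the maximal chain descent order P_λ(2) on the maximal chains of L; that is, G_lex is the Hasse diagram of P_λ(2). -/
/-- A polygon move of the maximal chain descent order `P_λ(2)` (for a geometric lattice its
intervals of rank 2 are diamonds, so a polygon move replaces the element at a descent by
the unique element producing an ascent): this is exactly a directed edge of `G_lex`. -/
def PolygonMove {L : Type*} [PartialOrder L] [BoundedOrder L] (f : L → ℕ)
    (lab : L → L → L) {r : ℕ} (M M' : {g : Fin (r+1) → L // IsMaxChainFun r g}) : Prop :=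
  ∃ i : ℕ, TMove f lab i M.1 M'.1


/-!
A move of `G_lex` at a descent in position `i` changes only the labels in positions `i - 1`
and `i`. Since the labeling is minimal, the old label in position `i` is the least atom of
the rank-two interval, so it becomes the new label in position `i - 1`, which therefore
drops, while the label in position `i` strictly rises. Hence along any sequence of moves the
sequence of label values drops at its first change and rises at its last one, and these two
positions are determined by the endpoints alone. If a move `M → M'` at `i` factored through
some `X`, every move of the factorization would thus have to take place at `i`; but a move
at `i` leaves an ascent at `i`, so no move at `i` can follow it.
-/

section MinimalLabeling

variable {L : Type*} [Lattice L] [OrderBot L] {f : L → ℕ} {lab : L → L → L}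

theorem IsMinimalLabeling.le_of_descent (hlab : IsMinimalLabeling f lab) {x y z : L}
    (hxy : x ⋖ y) (hyz : y ⋖ z) (hdesc : f (lab y z) < f (lab x y)) {d : L} (hd : IsAtom d)
    (hdz : d ≤ z) (hdx : ¬ d ≤ x) : f (lab y z) ≤ f d := by
  by_cases hdy : d ≤ y
  · exact hdesc.le.trans ((hlab x y hxy).2.2.2 d hd hdy hdx)
  · exact (hlab y z hyz).2.2.2 d hd hdz hdy

theorem IsMinimalLabeling.swap_at_descent (hf : Set.InjOn f {a : L | IsAtom a})
    (hlab : IsMinimalLabeling f lab) {x y y' z : L} (hxy : x ⋖ y) (hyz : y ⋖ z)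
    (hxy' : x ⋖ y') (hy'z : y' ⋖ z) (hdesc : f (lab y z) < f (lab x y))
    (hasc : f (lab x y') ≤ f (lab y' z)) :
    f (lab x y') = f (lab y z) ∧ f (lab y z) < f (lab y' z) := by
  obtain ⟨hb, hbz, hby, -⟩ := hlab y z hyz
  obtain ⟨hb', hb'y', hb'x, hb'min⟩ := hlab x y' hxy'
  obtain ⟨hc', hc'z, hc'y', hc'min⟩ := hlab y' z hy'z
  have hbx : ¬ lab y z ≤ x := fun h => hby (h.trans hxy.le)
  have hb_b' : f (lab y z) ≤ f (lab x y') :=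
    hlab.le_of_descent hxy hyz hdesc hb' (hb'y'.trans hy'z.le) hb'x
  have hb_c' : f (lab y z) ≤ f (lab y' z) :=
    hlab.le_of_descent hxy hyz hdesc hc' hc'z fun h => hc'y' (h.trans hxy'.le)
  have hby' : lab y z ≤ y' := by
    by_contra hby'
    have hc'_b : f (lab y' z) ≤ f (lab y z) := hc'min _ hb hbz hby'
    have : lab x y' = lab y z := hf hb' hb (le_antisymm (hasc.trans hc'_b) hb_b')
    exact hby' (this ▸ hb'y')
  have hne : lab y' z ≠ lab y z := fun h => hc'y' (h ▸ hby')
  exact ⟨le_antisymm (hb'min _ hb hby' hbx) hb_b',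
    lt_of_le_of_ne hb_c' fun h => hne (hf hc' hb h.symm)⟩

end MinimalLabeling

/-- `v` is lexicographically smaller than `u`, first differing at `a`, and
colexicographically larger, last differing at `b`. -/
structure DiffWindow (u v : ℕ → ℕ) (a b : ℕ) : Prop where
  eq_of_lt : ∀ p < a, v p = u p
  lt_left : v a < u a
  eq_of_gt : ∀ p, b < p → v p = u p
  lt_right : u b < v b

namespace DiffWindow

variable {u v w : ℕ → ℕ} {a b a' b' : ℕ}

theorem trans (h : DiffWindow u v a b) (h' : DiffWindow v w a' b') :
    DiffWindow u w (min a a') (max b b') where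
  eq_of_lt p hp := by
    rw [h'.eq_of_lt p (by omega), h.eq_of_lt p (by omega)]
  lt_left := by
    rcases lt_trichotomy a a' with ha | rfl | ha
    · rw [min_eq_left ha.le, h'.eq_of_lt a ha]
      exact h.lt_left
    · rw [min_self]
      exact h'.lt_left.trans h.lt_left
    · rw [min_eq_right ha.le, ← h.eq_of_lt a' ha]
      exact h'.lt_left
  eq_of_gt p hp := by
    rw [h'.eq_of_gt p (by omega), h.eq_of_gt p (by omega)]
  lt_right := by
    rcases lt_trichotomy b b' with hb | rfl | hb
    · rw [max_eq_right hb.le, ← h.eq_of_gt b' hb]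
      exact h'.lt_right
    · rw [max_self]
      exact h.lt_right.trans h'.lt_right
    · rw [max_eq_left hb.le, h'.eq_of_gt b hb]
      exact h.lt_right

theorem unique (h : DiffWindow u v a b) (h' : DiffWindow u v a' b') : a = a' ∧ b = b' := by
  constructor
  · rcases lt_trichotomy a a' with ha | ha | ha
    · exact absurd (h'.eq_of_lt a ha) h.lt_left.ne
    · exact ha
    · exact absurd (h.eq_of_lt a' ha) h'.lt_left.ne
  · rcases lt_trichotomy b b' with hb | hb | hb
    · exact absurd (h.eq_of_gt b' hb) h'.lt_right.ne'
    · exact hb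
    · exact absurd (h'.eq_of_gt b hb) h.lt_right.ne'

end DiffWindow

section LabelSequences

variable {L : Type*} {r : ℕ} {f : L → ℕ} {lab : L → L → L}

variable (f lab) in
/-- `f` of the label in position `p` of `g`, and `0` for `p ≥ r`. -/
def labelVal (g : Fin (r + 1) → L) (p : ℕ) : ℕ :=
  if h : p + 1 ≤ r then f (lab (g ⟨p, by omega⟩) (g ⟨p + 1, by omega⟩)) else 0

theorem labelVal_eq (g : Fin (r + 1) → L) (p k : ℕ) (hk : k < r + 1) (hpk : k = p + 1) :
    labelVal f lab g p = f (lab (g ⟨p, by omega⟩) (g ⟨k, hk⟩)) := by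
  subst hpk
  simp only [labelVal, dif_pos (Nat.le_of_lt_succ hk)]

theorem labelVal_congr {g g' : Fin (r + 1) → L} {p : ℕ}
    (h : ∀ j : Fin (r + 1), (j : ℕ) = p ∨ (j : ℕ) = p + 1 → g' j = g j) :
    labelVal f lab g' p = labelVal f lab g p := by
  unfold labelVal
  split_ifs
  · rw [h _ (Or.inl rfl), h _ (Or.inr rfl)]
  · rfl

theorem TMove.not_tMove {q : ℕ} {X Y Z : Fin (r + 1) → L} (hXY : TMove f lab q X Y) :
    ¬ TMove f lab q Y Z := by
  obtain ⟨_, _, _, _, _, hasc⟩ := hXY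
  rintro ⟨_, _, hdesc, _⟩
  exact (not_le.2 hdesc) hasc

end LabelSequences

section MaximalChains

variable {L : Type*} [Lattice L] [BoundedOrder L] {r : ℕ} {f : L → ℕ} {lab : L → L → L}

theorem IsMaxChainFun.covBy_s17 {g : Fin (r + 1) → L} (hg : IsMaxChainFun r g)
    {j k : Fin (r + 1)} (hjk : (k : ℕ) = j + 1) : g j ⋖ g k := by
  have h := hg.2.2 ⟨j, by omega⟩
  rwa [show (⟨j, by omega⟩ : Fin r).castSucc = j from rfl,
    show (⟨j, by omega⟩ : Fin r).succ = k from Fin.ext hjk.symm] at h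

theorem TMove.diffWindow (hf : Set.InjOn f {a : L | IsAtom a})
    (hlab : IsMinimalLabeling f lab) {q : ℕ} {X X' : Fin (r + 1) → L}
    (hX : IsMaxChainFun r X) (hX' : IsMaxChainFun r X') (hT : TMove f lab q X X') :
    DiffWindow (labelVal f lab X) (labelVal f lab X') (q - 1) q := by
  obtain ⟨hq, hqr, hdesc, -, hsame, hasc⟩ := hT
  have hx : X' ⟨q - 1, by omega⟩ = X ⟨q - 1, by omega⟩ := hsame _ (by simp only; omega)
  have hz : X' ⟨q + 1, by omega⟩ = X ⟨q + 1, by omega⟩ := hsame _ (by simp only; omega)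
  rw [hx, hz] at hasc
  have hxy' : X ⟨q - 1, by omega⟩ ⋖ X' ⟨q, by omega⟩ := by
    rw [← hx]
    exact hX'.covBy_s17 (by simp only; omega)
  have hy'z : X' ⟨q, by omega⟩ ⋖ X ⟨q + 1, by omega⟩ := by
    rw [← hz]
    exact hX'.covBy_s17 rfl
  obtain ⟨hleft, hright⟩ := hlab.swap_at_descent hf (hX.covBy_s17 (by simp only; omega))
    (hX.covBy_s17 rfl) hxy' hy'z hdesc hasc
  refine ⟨fun p hp => ?_, ?_, fun p hp => ?_, ?_⟩
  · exact labelVal_congr fun j hj => hsame j (by omega)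
  · rw [labelVal_eq X' (q - 1) q (by omega) (by omega), hx,
      labelVal_eq X (q - 1) q (by omega) (by omega), hleft]
    exact hdesc
  · exact labelVal_congr fun j hj => hsame j (by omega)
  · rw [labelVal_eq X' q (q + 1) (by omega) rfl, hz, labelVal_eq X q (q + 1) (by omega) rfl]
    exact hright

variable (f lab) in
/-- A move whose changed label positions `q - 1, q` lie in `[a, b]`. -/
def MoveWithin (a b : ℕ) (Y Z : {g : Fin (r + 1) → L // IsMaxChainFun r g}) : Prop :=
  ∃ q, a < q ∧ q ≤ b ∧ TMove f lab q Y.1 Z.1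

theorem MoveWithin.mono {a b a' b' : ℕ} (ha : a' ≤ a) (hb : b ≤ b')
    {Y Z : {g : Fin (r + 1) → L // IsMaxChainFun r g}} (h : MoveWithin f lab a b Y Z) :
    MoveWithin f lab a' b' Y Z :=
  let ⟨q, haq, hqb, hT⟩ := h
  ⟨q, by omega, by omega, hT⟩

theorem PolygonMove.irrefl (M : {g : Fin (r + 1) → L // IsMaxChainFun r g}) :
    ¬ PolygonMove f lab M M := by
  rintro ⟨i, _, _, _, hne, _⟩
  exact hne rfl

theorem exists_diffWindow_of_transGen (hf : Set.InjOn f {a : L | IsAtom a})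
    (hlab : IsMinimalLabeling f lab) {Y Z : {g : Fin (r + 1) → L // IsMaxChainFun r g}}
    (h : Relation.TransGen (PolygonMove f lab) Y Z) :
    ∃ a b, DiffWindow (labelVal f lab Y.1) (labelVal f lab Z.1) a b ∧
      Relation.TransGen (MoveWithin f lab a b) Y Z := by
  induction h with
  | @single W hmove =>
    obtain ⟨q, hT⟩ := hmove
    exact ⟨q - 1, q, hT.diffWindow hf hlab Y.2 W.2,
      .single ⟨q, by have := hT.1; omega, le_rfl, hT⟩⟩
  | @tail V W _ hmove ih =>
    obtain ⟨q, hT⟩ := hmove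
    obtain ⟨a, b, hwin, hpath⟩ := ih
    refine ⟨min a (q - 1), max b q, hwin.trans (hT.diffWindow hf hlab V.2 W.2), ?_⟩
    refine .tail (Relation.TransGen.mono (fun _ _ => MoveWithin.mono (min_le_left _ _)
      (le_max_left _ _)) _ _ hpath) ⟨q, by have := hT.1; omega, le_max_right _ _, hT⟩

theorem PolygonMove.not_transGen_through (hf : Set.InjOn f {a : L | IsAtom a})
    (hlab : IsMinimalLabeling f lab) {M M' X : {g : Fin (r + 1) → L // IsMaxChainFun r g}}
    (hmove : PolygonMove f lab M M') (hMX : Relation.TransGen (PolygonMove f lab) M X)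
    (hXM' : Relation.TransGen (PolygonMove f lab) X M') : False := by
  obtain ⟨i, hi⟩ := hmove
  obtain ⟨a₁, b₁, hwin₁, hpath₁⟩ := exists_diffWindow_of_transGen hf hlab hMX
  obtain ⟨a₂, b₂, hwin₂, hpath₂⟩ := exists_diffWindow_of_transGen hf hlab hXM'
  obtain ⟨ha, hb⟩ := (hwin₁.trans hwin₂).unique (hi.diffWindow hf hlab M.2 M'.2)
  obtain ⟨W, -, q₁, hq₁a, hq₁b, hWX⟩ := Relation.TransGen.tail'_iff.1 hpath₁
  obtain ⟨W', ⟨q₂, hq₂a, hq₂b, hXW'⟩, -⟩ := Relation.TransGen.head'_iff.1 hpath₂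
  obtain rfl : q₁ = q₂ := by omega
  exact hWX.not_tMove hXW'

end MaximalChains

theorem Relation.TransGen.rel_of_not_exists_between {α : Type*} {R : α → α → Prop}
    (hR : ∀ a, ¬ R a a) {a c : α} (h : Relation.TransGen R a c)
    (hno : ¬ ∃ b, b ≠ a ∧ b ≠ c ∧ Relation.TransGen R a b ∧ Relation.TransGen R b c) :
    R a c := by
  obtain ⟨b, hab, hbc⟩ := Relation.TransGen.head'_iff.1 h
  rcases Relation.reflTransGen_iff_eq_or_transGen.1 hbc with rfl | hbc
  · exact hab
  · by_cases hb : b = c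
    · exact hb ▸ hab
    · exact absurd ⟨b, fun hba => hR a (hba ▸ hab), hb, .single hab, hbc⟩ hno

theorem stmt17_general (L : Type*) [Lattice L] [BoundedOrder L] (r : ℕ)
    (f : L → ℕ) (hf : Set.InjOn f {a : L | IsAtom a})
    (lab : L → L → L) (hlab : IsMinimalLabeling f lab) :
    ∀ M M' : {g : Fin (r+1) → L // IsMaxChainFun r g},
      PolygonMove f lab M M' ↔
        (Relation.TransGen (PolygonMove f lab) M M' ∧
          ¬ ∃ X : {g : Fin (r+1) → L // IsMaxChainFun r g}, X ≠ M ∧ X ≠ M' ∧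
            Relation.TransGen (PolygonMove f lab) M X ∧
            Relation.TransGen (PolygonMove f lab) X M') := by
  intro M M'
  refine ⟨fun hmove => ⟨.single hmove, ?_⟩, fun ⟨h, hno⟩ => h.rel_of_not_exists_between
    PolygonMove.irrefl hno⟩
  rintro ⟨X, -, -, hMX, hXM'⟩
  exact hmove.not_transGen_through hf hlab hMX hXM'

/-- The directed edges of `G_lex` are exactly the cover relations of the maximal chain
descent order `P_λ(2)` (the transitive closure of the polygon moves); that is, `G_lex` is
the Hasse diagram of `P_λ(2)`: `M'` is covered by `M` (nothing strictly between) iff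
there is a polygon move from `M` to `M'`. -/
theorem stmt17 (L : Type*) [Lattice L] [Fintype L] [BoundedOrder L] (r : ℕ)
    (hgeo : IsGeometricLattice L)
    (hrank : ∀ c : Set L, IsMaxChain (· ≤ ·) c → c.ncard = r + 1)
    (f : L → ℕ) (hf : Set.InjOn f {a : L | IsAtom a})
    (lab : L → L → L) (hlab : IsMinimalLabeling f lab) :
    ∀ M M' : {g : Fin (r+1) → L // IsMaxChainFun r g},
      PolygonMove f lab M M' ↔
        (Relation.TransGen (PolygonMove f lab) M M' ∧
          ¬ ∃ X : {g : Fin (r+1) → L // IsMaxChainFun r g}, X ≠ M ∧ X ≠ M' ∧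
            Relation.TransGen (PolygonMove f lab) M X ∧
            Relation.TransGen (PolygonMove f lab) X M') :=
  stmt17_general L r f hf lab hlab
end
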